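/- arXiv:2002.05004 — 7 statements merged into one kernel-verified Lean document; each statement's English description precedes it below -/
import Mathlib

section
/- Let Ω ⊆ ℝ^n be an open set and θ : Ω → ℝ a continuously differentiable function whose gradient ∇θ is locally Lipschitz on Ω. Let K : Ω ⇒ S^n (the space of n×n real symmetric matrices) be a set-valued mapping that is nonempty-valued, compact-valued and upper semicontinuous, and suppose ∇θ is semismooth at a point x ∈ Ω with respect to K. Then θ(x+d) − θ(x) − ⟨∇θ(x), d⟩ − ½⟨d, Vd⟩ = o(‖d‖²) uniformly over V ∈ K(x+d) as d → 0; that is, for every ε > 0 there exists δ > 0 such that for all d with 0 < ‖d‖ < δ and x+d ∈ Ω, and for every V ∈ K(x+d), |θ(x+d) − θ(x) − ⟨∇θ(x), d⟩ − ½ dᵀVd| ≤ ε‖d‖². -/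
/-!
Since `∇θ` is Lipschitz near `x`, its difference quotients `t⁻¹ (∇θ(x + t u) - ∇θ(x))` are
equi-Lipschitz in `u`, so they converge to the directional derivative `D u` uniformly on the
compact unit sphere; by positive homogeneity of `D` this means `∇θ(x+h) - ∇θ(x) - D h = o(‖h‖)`.
Integrating along the segment `[x, x + d]` gives
`θ(x+d) - θ(x) - ⟪∇θ(x), d⟫ - ½⟪d, D d⟫ = o(‖d‖²)`, and comparing the same estimate with
semismoothness gives `‖D d - V d‖ = o(‖d‖)` uniformly in `V ∈ K(x+d)`.
-/

open Filter Metric Set Asymptotics Topology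
open scoped RealInnerProductSpace

section Lipschitz

variable {ι X Y : Type*} [PseudoMetricSpace X] [PseudoMetricSpace Y] {l : Filter ι}
  {f : ι → X → Y} {f₀ : X → Y} {S : Set X} {L : NNReal}

theorem LipschitzOnWith.of_tendsto [l.NeBot] (hf : ∀ᶠ i in l, LipschitzOnWith L (f i) S)
    (hlim : ∀ u ∈ S, Tendsto (f · u) l (𝓝 (f₀ u))) : LipschitzOnWith L f₀ S :=
  LipschitzOnWith.of_dist_le_mul fun u hu v hv =>
    le_of_tendsto ((hlim u hu).dist (hlim v hv))
      (hf.mono fun _ hi => hi.dist_le_mul u hu v hv)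

theorem TendstoUniformlyOn.of_lipschitzOnWith [l.NeBot] (hS : IsCompact S)
    (hf : ∀ᶠ i in l, LipschitzOnWith L (f i) S)
    (hlim : ∀ u ∈ S, Tendsto (f · u) l (𝓝 (f₀ u))) : TendstoUniformlyOn f f₀ l S := by
  have hf₀ := LipschitzOnWith.of_tendsto hf hlim
  rw [Metric.tendstoUniformlyOn_iff]
  intro ε hε
  obtain ⟨η, hη, hηε⟩ : ∃ η > 0, (2 * L + 1) * η < ε :=
    ⟨ε / (2 * L + 2), by positivity, by
      rw [← mul_div_assoc, div_lt_iff₀ (by positivity)]; nlinarith⟩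
  obtain ⟨t, htS, htfin, hcover⟩ := hS.finite_cover_balls hη
  have hnet : ∀ᶠ i in l, ∀ c ∈ t, f i c ∈ ball (f₀ c) η :=
    htfin.eventually_all.2 fun c hc => (hlim c (htS hc)).eventually (ball_mem_nhds _ hη)
  filter_upwards [hf, hnet] with i hfi hnet u hu
  obtain ⟨c, hct, huc⟩ := mem_iUnion₂.1 (hcover hu)
  rw [mem_ball] at huc
  calc dist (f₀ u) (f i u)
      ≤ dist (f₀ u) (f₀ c) + dist (f₀ c) (f i c) + dist (f i c) (f i u) := dist_triangle4 _ _ _ _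
    _ ≤ L * η + η + L * η := by
        gcongr
        · exact (hf₀.dist_le_mul u hu c (htS hct)).trans (by gcongr)
        · exact (mem_ball'.1 (hnet c hct)).le
        · exact (hfi.dist_le_mul c (htS hct) u hu).trans (by rw [dist_comm]; gcongr)
    _ = (2 * L + 1) * η := by ring
    _ < ε := hηε

end Lipschitz

section DirectionalDerivative

variable {E F : Type*} [NormedAddCommGroup E] [NormedSpace ℝ E] [NormedAddCommGroup F]
  [NormedSpace ℝ F] {g : E → F} {D : E → F} {x : E} {s : Set E} {L : NNReal}

def HasDirDerivAt (g D : E → F) (x : E) : Prop :=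
  ∀ h, Tendsto (fun t : ℝ => t⁻¹ • (g (x + t • h) - g x)) (𝓝[>] 0) (𝓝 (D h))

theorem LipschitzOnWith.differenceQuotient (hg : LipschitzOnWith L g s) {t : ℝ} (ht : 0 < t)
    {S : Set E} (hS : ∀ u ∈ S, x + t • u ∈ s) :
    LipschitzOnWith L (fun u => t⁻¹ • (g (x + t • u) - g x)) S := by
  refine LipschitzOnWith.of_dist_le_mul fun u hu v hv => ?_
  have hgt := hg.dist_le_mul _ (hS u hu) _ (hS v hv)
  rw [dist_add_left, dist_smul₀, Real.norm_of_nonneg ht.le] at hgt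
  rw [dist_smul₀, dist_sub_right, Real.norm_of_nonneg (inv_nonneg.2 ht.le)]
  calc t⁻¹ * dist (g (x + t • u)) (g (x + t • v)) ≤ t⁻¹ * (L * (t * dist u v)) := by gcongr
    _ = L * dist u v := by field_simp

namespace HasDirDerivAt

theorem map_zero (hD : HasDirDerivAt g D x) : D 0 = 0 :=
  tendsto_nhds_unique (hD 0) (by simp)

theorem map_smul (hD : HasDirDerivAt g D x) {c : ℝ} (hc : 0 ≤ c) (h : E) :
    D (c • h) = c • D h := by
  rcases hc.eq_or_lt with rfl | hc
  · simp [hD.map_zero]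
  have hmul : Tendsto (c * ·) (𝓝[>] (0 : ℝ)) (𝓝[>] 0) :=
    tendsto_iff_comap.2 (comap_mulLeft_nhdsGT_zero hc).ge
  refine tendsto_nhds_unique (hD (c • h)) ((((hD h).comp hmul).const_smul c).congr fun t => ?_)
  change c • ((c * t)⁻¹ • (g (x + (c * t) • h) - g x)) = t⁻¹ • (g (x + t • c • h) - g x)
  rw [smul_smul, mul_inv, ← mul_assoc, mul_inv_cancel₀ hc.ne', one_mul, mul_comm c t, mul_smul]

theorem isLittleO_of_lipschitzOnWith [FiniteDimensional ℝ E] (hD : HasDirDerivAt g D x)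
    (hg : LipschitzOnWith L g s) (hs : s ∈ 𝓝 x) :
    (fun h => g (x + h) - g x - D h) =o[𝓝 0] fun h => h := by
  obtain ⟨r, hr, hball⟩ := Metric.mem_nhds_iff.1 hs
  have hlip : ∀ᶠ t in 𝓝[>] (0 : ℝ), LipschitzOnWith L (fun u => t⁻¹ • (g (x + t • u) - g x))
      (sphere 0 1) := by
    filter_upwards [Ioo_mem_nhdsGT hr] with t ht
    refine hg.differenceQuotient ht.1 fun u hu => hball ?_
    rw [mem_sphere_zero_iff_norm] at hu
    simpa [norm_smul, hu, abs_of_pos ht.1] using ht.2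
  have hunif := TendstoUniformlyOn.of_lipschitzOnWith (isCompact_sphere 0 1) hlip
    fun u _ => hD u
  refine isLittleO_iff.2 fun c hc => ?_
  have hnear := ((tendsto_norm_nhdsNE_zero (E := E)).eventually
    (Metric.tendstoUniformlyOn_iff.1 hunif c hc))
  filter_upwards [eventually_nhdsWithin_iff.1 hnear] with h hh
  rcases eq_or_ne h 0 with rfl | h0
  · simp [hD.map_zero]
  set u := ‖h‖⁻¹ • h
  have hu : u ∈ sphere (0 : E) 1 := by simp [u, norm_smul, h0]
  have hhu : h = ‖h‖ • u := by simp [u, smul_smul, h0]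
  have key : g (x + h) - g x - D h = ‖h‖ • (‖h‖⁻¹ • (g (x + ‖h‖ • u) - g x) - D u) := by
    rw [smul_sub, smul_smul, mul_inv_cancel₀ (norm_ne_zero_iff.2 h0), one_smul,
      ← hD.map_smul (norm_nonneg h), ← hhu]
  rw [key, norm_smul, norm_norm, mul_comm, ← dist_eq_norm, dist_comm]
  exact mul_le_mul_of_nonneg_right (hh h0 u hu).le (norm_nonneg h)

end HasDirDerivAt

end DirectionalDerivative

section SecondOrder

variable {E : Type*} [NormedAddCommGroup E] [InnerProductSpace ℝ E] [CompleteSpace E]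

theorem HasGradientAt.hasDerivAt_comp_add_smul {θ : E → ℝ} {v x d : E} {t : ℝ}
    (h : HasGradientAt θ v (x + t • d)) : HasDerivAt (fun t : ℝ => θ (x + t • d)) ⟪v, d⟫ t := by
  have hline : HasDerivAt (fun t : ℝ => x + t • d) d t := by
    simpa using ((hasDerivAt_id t).smul_const d).const_add x
  simpa [Function.comp_def] using h.hasFDerivAt.comp_hasDerivAt t hline

theorem HasDirDerivAt.isLittleO_secondOrder {θ : E → ℝ} {g D : E → E} {x : E}
    (hθ : ∀ᶠ y in 𝓝 x, HasGradientAt θ (g y) y) (hD : HasDirDerivAt g D x)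
    (hB : (fun h => g (x + h) - g x - D h) =o[𝓝 0] fun h => h) :
    (fun d => θ (x + d) - θ x - ⟪g x, d⟫ - (1 / 2) * ⟪d, D d⟫) =o[𝓝 0] fun d => ‖d‖ ^ 2 := by
  refine isLittleO_iff.2 fun c hc => ?_
  have hθ₀ : ∀ᶠ h in 𝓝 (0 : E), HasGradientAt θ (g (x + h)) (x + h) :=
    ((continuous_const_add x).tendsto' 0 x (add_zero x)).eventually hθ
  obtain ⟨δ, hδ, hnear⟩ := Metric.eventually_nhds_iff_ball.1 ((isLittleO_iff.1 hB hc).and hθ₀)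
  filter_upwards [ball_mem_nhds 0 hδ] with d hd
  have hsegment : ∀ t ∈ Icc (0 : ℝ) 1, t • d ∈ ball (0 : E) δ ∧ ‖t • d‖ ≤ ‖d‖ := by
    intro t ht
    have : ‖t • d‖ ≤ ‖d‖ := by
      rw [norm_smul, Real.norm_of_nonneg ht.1]
      exact mul_le_of_le_one_left (norm_nonneg d) ht.2
    exact ⟨mem_ball_zero_iff.2 (this.trans_lt (mem_ball_zero_iff.1 hd)), this⟩
  have hderiv : ∀ t ∈ Icc (0 : ℝ) 1, HasDerivWithinAt
      (fun t => θ (x + t • d) - (t * ⟪g x, d⟫ + t ^ 2 / 2 * ⟪d, D d⟫))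
      ⟪g (x + t • d) - g x - D (t • d), d⟫ (Icc 0 1) t := by
    intro t ht
    have hpoly := ((hasDerivAt_id t).mul_const ⟪g x, d⟫).add
      (((hasDerivAt_pow 2 t).div_const 2).mul_const ⟪d, D d⟫)
    refine (((hnear _ (hsegment t ht).1).2.hasDerivAt_comp_add_smul.sub hpoly).congr_deriv ?_)
      |>.hasDerivWithinAt
    rw [hD.map_smul ht.1, inner_sub_left, inner_sub_left, real_inner_smul_left,
      real_inner_comm d (D d)]
    norm_num
    ring
  have hbound : ∀ t ∈ Ico (0 : ℝ) 1, ‖⟪g (x + t • d) - g x - D (t • d), d⟫‖ ≤ c * ‖d‖ ^ 2 := by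
    intro t ht
    obtain ⟨hmem, hle⟩ := hsegment t (Ico_subset_Icc_self ht)
    calc ‖⟪g (x + t • d) - g x - D (t • d), d⟫‖
        ≤ ‖g (x + t • d) - g x - D (t • d)‖ * ‖d‖ := norm_inner_le_norm _ _
      _ ≤ c * ‖t • d‖ * ‖d‖ := by gcongr; exact (hnear _ hmem).1
      _ ≤ c * ‖d‖ ^ 2 := by rw [sq, ← mul_assoc]; gcongr
  rw [norm_pow, norm_norm]
  refine (le_of_eq ?_).trans (norm_image_sub_le_of_norm_deriv_le_segment_01' hderiv hbound)
  congr 1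
  simp
  ring

end SecondOrder

theorem stmt0_general {n : ℕ}
    (Ω : Set (EuclideanSpace ℝ (Fin n))) (hΩ : IsOpen Ω)
    (θ : EuclideanSpace ℝ (Fin n) → ℝ)
    (g : EuclideanSpace ℝ (Fin n) → EuclideanSpace ℝ (Fin n))
    -- θ is continuously differentiable on Ω with gradient g
    (hgrad : ∀ y ∈ Ω, HasGradientAt θ (g y) y)
    -- g = ∇θ is locally Lipschitz on Ω
    (hglip : ∀ y ∈ Ω, ∃ (L : NNReal) (r : ℝ), 0 < r ∧
      LipschitzOnWith L g (Metric.ball y r ∩ Ω))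
    (K : EuclideanSpace ℝ (Fin n) → Set (Matrix (Fin n) (Fin n) ℝ))
    (x : EuclideanSpace ℝ (Fin n)) (hx : x ∈ Ω)
    -- g is directionally differentiable at x
    (hdd : ∀ h : EuclideanSpace ℝ (Fin n), ∃ Dg : EuclideanSpace ℝ (Fin n),
      Filter.Tendsto (fun t : ℝ => t⁻¹ • (g (x + t • h) - g x))
        (nhdsWithin 0 (Set.Ioi (0:ℝ))) (nhds Dg))
    -- g is semismooth at x with respect to K:
    -- g(x+Δx) − g(x) − V·Δx = o(‖Δx‖) uniformly over V ∈ K(x+Δx)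
    (hss : ∀ ε > (0:ℝ), ∃ δ > (0:ℝ), ∀ d : EuclideanSpace ℝ (Fin n),
      ‖d‖ < δ → x + d ∈ Ω → ∀ V ∈ K (x + d),
        ‖g (x + d) - g x - Matrix.toEuclideanLin V d‖ ≤ ε * ‖d‖) :
    ∀ ε > (0:ℝ), ∃ δ > (0:ℝ), ∀ d : EuclideanSpace ℝ (Fin n),
      0 < ‖d‖ → ‖d‖ < δ → x + d ∈ Ω → ∀ V ∈ K (x + d),
        |θ (x + d) - θ x - ⟪g x, d⟫ - (1/2) * ⟪d, Matrix.toEuclideanLin V d⟫| ≤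
          ε * ‖d‖^2 := by
  choose D hD using hdd
  replace hD : HasDirDerivAt g D x := hD
  obtain ⟨L, r, hr, hlip⟩ := hglip x hx
  have hB := hD.isLittleO_of_lipschitzOnWith hlip
    (inter_mem (ball_mem_nhds x hr) (hΩ.mem_nhds hx))
  have hT := hD.isLittleO_secondOrder (eventually_of_mem (hΩ.mem_nhds hx) hgrad) hB
  intro ε hε
  obtain ⟨δ₁, hδ₁, hss'⟩ := hss (ε / 2) (half_pos hε)
  obtain ⟨δ₂, hδ₂, hnear⟩ := Metric.eventually_nhds_iff_ball.1
    ((isLittleO_iff.1 hB (half_pos hε)).and (isLittleO_iff.1 hT (half_pos hε)))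
  refine ⟨min δ₁ δ₂, lt_min hδ₁ hδ₂, fun d _ hd hdΩ V hV => ?_⟩
  obtain ⟨hBd, hTd⟩ := hnear d (mem_ball_zero_iff.2 (hd.trans_le (min_le_right _ _)))
  have hVd := hss' d (hd.trans_le (min_le_left _ _)) hdΩ V hV
  set Vd := Matrix.toEuclideanLin V d
  have hDV : ‖D d - Vd‖ ≤ ε * ‖d‖ := by
    have := norm_sub_le (g (x + d) - g x - Vd) (g (x + d) - g x - D d)
    rw [sub_sub_sub_cancel_left] at this
    linarith
  calc |θ (x + d) - θ x - ⟪g x, d⟫ - (1/2) * ⟪d, Vd⟫|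
      = |(θ (x + d) - θ x - ⟪g x, d⟫ - (1/2) * ⟪d, D d⟫) + (1/2) * ⟪d, D d - Vd⟫| := by
        rw [inner_sub_right]; ring_nf
    _ ≤ ε / 2 * ‖d‖ ^ 2 + (1/2) * (‖d‖ * (ε * ‖d‖)) := by
        refine (abs_add_le _ _).trans (add_le_add ?_ ?_)
        · simpa using hTd
        · rw [abs_mul, abs_of_pos one_half_pos]
          gcongr
          exact (abs_real_inner_le_norm _ _).trans (by gcongr)
    _ = ε * ‖d‖ ^ 2 := by ring

/-- second-order expansion for a `C¹` function `θ` whose gradient `g = ∇θ`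
is locally Lipschitz on an open set `Ω ⊆ ℝⁿ` and semismooth at `x ∈ Ω` with respect to a
nonempty-, compact- and symmetric-matrix-valued, upper semicontinuous set-valued mapping
`K`.  Then `θ(x+d) − θ(x) − ⟨∇θ(x), d⟩ − ½⟨d, Vd⟩ = o(‖d‖²)` uniformly over
`V ∈ K(x+d)` as `d → 0`. -/
theorem stmt0 {n : ℕ}
    (Ω : Set (EuclideanSpace ℝ (Fin n))) (hΩ : IsOpen Ω)
    (θ : EuclideanSpace ℝ (Fin n) → ℝ)
    (g : EuclideanSpace ℝ (Fin n) → EuclideanSpace ℝ (Fin n))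
    -- θ is continuously differentiable on Ω with gradient g
    (hgrad : ∀ y ∈ Ω, HasGradientAt θ (g y) y)
    (hgcont : ContinuousOn g Ω)
    -- g = ∇θ is locally Lipschitz on Ω
    (hglip : ∀ y ∈ Ω, ∃ (L : NNReal) (r : ℝ), 0 < r ∧
      LipschitzOnWith L g (Metric.ball y r ∩ Ω))
    -- K is a nonempty-valued, compact-valued set-valued map into symmetric matrices
    (K : EuclideanSpace ℝ (Fin n) → Set (Matrix (Fin n) (Fin n) ℝ))
    (hKne : ∀ y ∈ Ω, (K y).Nonempty)
    (hKcpt : ∀ y ∈ Ω, IsCompact (K y))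
    (hKsymm : ∀ y ∈ Ω, ∀ V ∈ K y, V.IsSymm)
    -- K is upper semicontinuous on Ω
    (hKusc : ∀ y ∈ Ω, ∀ U : Set (Matrix (Fin n) (Fin n) ℝ), IsOpen U → K y ⊆ U →
      ∃ r > (0:ℝ), ∀ z ∈ Metric.ball y r ∩ Ω, K z ⊆ U)
    (x : EuclideanSpace ℝ (Fin n)) (hx : x ∈ Ω)
    -- g is directionally differentiable at x
    (hdd : ∀ h : EuclideanSpace ℝ (Fin n), ∃ Dg : EuclideanSpace ℝ (Fin n),
      Filter.Tendsto (fun t : ℝ => t⁻¹ • (g (x + t • h) - g x))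
        (nhdsWithin 0 (Set.Ioi (0:ℝ))) (nhds Dg))
    -- g is semismooth at x with respect to K:
    -- g(x+Δx) − g(x) − V·Δx = o(‖Δx‖) uniformly over V ∈ K(x+Δx)
    (hss : ∀ ε > (0:ℝ), ∃ δ > (0:ℝ), ∀ d : EuclideanSpace ℝ (Fin n),
      ‖d‖ < δ → x + d ∈ Ω → ∀ V ∈ K (x + d),
        ‖g (x + d) - g x - Matrix.toEuclideanLin V d‖ ≤ ε * ‖d‖) :
    ∀ ε > (0:ℝ), ∃ δ > (0:ℝ), ∀ d : EuclideanSpace ℝ (Fin n),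
      0 < ‖d‖ → ‖d‖ < δ → x + d ∈ Ω → ∀ V ∈ K (x + d),
        |θ (x + d) - θ x - ⟪g x, d⟫ - (1/2) * ⟪d, Matrix.toEuclideanLin V d⟫| ≤
          ε * ‖d‖^2 :=
  stmt0_general Ω hΩ θ g hgrad hglip K x hx hdd hss
end

section
/- Let b ∈ ℝ^n satisfy κ_λ(b) > τ. Then for every signed permutation matrix P ∈ Π^s(b), the projection of b onto the OWL1 norm ball satisfies Π_{Δ_τ}(b) = Pᵀ x_λ(Pb). -/
open Matrix

/-- The vector of absolute values of the entries of `x`, arranged in nonincreasing order. -/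
noncomputable def absDesc {n : ℕ} (x : Fin n → ℝ) : Fin n → ℝ :=
  fun i => |x ((Tuple.sort fun j => |x j|) i.rev)|

/-- The ordered weighted ℓ1 (OWL1) norm `κ_λ(x) = ∑ i, λ_i |x|ᵢ↓`. -/
noncomputable def kappa {n : ℕ} (lam x : Fin n → ℝ) : ℝ :=
  ∑ i, lam i * absDesc x i

/-- The monotone nonnegative cone `C = {x : x₁ ≥ x₂ ≥ … ≥ xₙ ≥ 0}`. -/
def coneC (n : ℕ) : Set (Fin n → ℝ) :=
  {x | (∀ i j : Fin n, i ≤ j → x j ≤ x i) ∧ ∀ i, 0 ≤ x i}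

/-- `P` is a signed permutation matrix. -/
def IsSignedPerm {n : ℕ} (P : Matrix (Fin n) (Fin n) ℝ) : Prop :=
  ∃ σ : Equiv.Perm (Fin n), ∃ ε : Fin n → ℝ,
    (∀ i, ε i = 1 ∨ ε i = -1) ∧ ∀ i j, P i j = if j = σ i then ε i else 0

/-- `p` minimizes `½‖x − b‖²` over `S`. -/
def IsMinimizer {n : ℕ} (S : Set (Fin n → ℝ)) (b p : Fin n → ℝ) : Prop :=
  p ∈ S ∧ ∀ x ∈ S, (1/2) * ∑ i, (p i - b i)^2 ≤ (1/2) * ∑ i, (x i - b i)^2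

/-!
Put `r = Pᵀ x_λ(Pb)`. As `Pᵀ` is a signed permutation and `x_λ(Pb) ∈ C`, we have
`|r|↓ = x_λ(Pb)`, so `κ_λ(r) = τ` and `‖r - b‖ = ‖x_λ(Pb) - Pb‖`. Since `b` lies outside the convex
ball `Δ_τ`, its projection `p` lies on the sphere `κ_λ(p) = τ`; hence `|p|↓` is feasible for the
problem defining `x_λ(Pb)`, and the rearrangement inequality `⟨p, b⟩ ≤ ⟨|p|↓, |b|↓⟩` gives
`‖|p|↓ - |b|↓‖ ≤ ‖p - b‖`. Altogether `‖r - b‖ ≤ ‖p - b‖`, and uniqueness of the projection onto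
the convex set `Δ_τ` forces `p = r`.
-/

open Finset

section SumSq

variable {ι : Type*} [Fintype ι]

lemma sum_sub_sq_eq (x y : ι → ℝ) :
    ∑ i, (x i - y i) ^ 2 = ∑ i, x i ^ 2 + ∑ i, y i ^ 2 - 2 * ∑ i, x i * y i := by
  simp only [sub_sq, sum_add_distrib, sum_sub_distrib, mul_sum, mul_assoc]
  ring

lemma eq_of_sum_sub_sq_nonpos {x y : ι → ℝ} (h : ∑ i, (x i - y i) ^ 2 ≤ 0) : x = y := by
  have h0 := (sum_eq_zero_iff_of_nonneg fun j _ => sq_nonneg (x j - y j)).1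
    (le_antisymm h (by positivity))
  funext i
  exact sub_eq_zero.1 (pow_eq_zero_iff two_ne_zero |>.1 (h0 i (mem_univ i)))

end SumSq

section Rearrangement

variable {n : ℕ}

noncomputable def absDescPerm (x : Fin n → ℝ) : Equiv.Perm (Fin n) :=
  (Tuple.sort fun j => |x j|) * Fin.revPerm

lemma absDesc_apply (x : Fin n → ℝ) (i : Fin n) : absDesc x i = |x (absDescPerm x i)| := rfl

lemma absDesc_nonneg (x : Fin n → ℝ) (i : Fin n) : 0 ≤ absDesc x i := abs_nonneg _

lemma antitone_absDesc (x : Fin n → ℝ) : Antitone (absDesc x) :=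
  fun _ _ hij => Tuple.monotone_sort (fun j => |x j|) (Fin.rev_le_rev.mpr hij)

lemma absDesc_eq_of_abs_comp_perm {x y : Fin n → ℝ} (σ : Equiv.Perm (Fin n))
    (h : ∀ i, |y (σ i)| = |x i|) : absDesc y = absDesc x := by
  have hsort := Tuple.comp_perm_comp_sort_eq_comp_sort (f := fun j => |y j|) (σ := σ)
  have hcomp : (fun j => |y j|) ∘ σ = fun j => |x j| := funext h
  rw [hcomp] at hsort
  funext i
  exact (congrFun hsort i.rev).symm

lemma absDesc_eq_self {x : Fin n → ℝ} (hx : Antitone x) (hx₀ : ∀ i, 0 ≤ x i) :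
    absDesc x = x := by
  have habs : (fun j => |x j|) = x := funext fun j => abs_of_nonneg (hx₀ j)
  have h := Tuple.unique_antitone (f := fun j => |x j|) (σ := absDescPerm x)
    (τ := Equiv.refl _) (antitone_absDesc x) (by rwa [Equiv.coe_refl, Function.comp_id, habs])
  rw [Equiv.coe_refl, Function.comp_id, habs] at h
  funext i
  rw [absDesc_apply, abs_of_nonneg (hx₀ _)]
  exact congrFun h i

lemma sum_mul_abs_comp_perm_le {w : Fin n → ℝ} (hw : Antitone w) (x : Fin n → ℝ)
    (ρ : Equiv.Perm (Fin n)) : ∑ i, w i * |x (ρ i)| ≤ ∑ i, w i * absDesc x i := by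
  have h : ∀ i, |x (ρ i)| = absDesc x (((absDescPerm x)⁻¹ * ρ) i) := fun i => by
    simp [absDesc_apply]
  simp only [h]
  exact (hw.monovary (antitone_absDesc x)).sum_mul_comp_perm_le_sum_mul

lemma sum_sq_absDesc (x : Fin n → ℝ) : ∑ i, absDesc x i ^ 2 = ∑ i, x i ^ 2 := by
  simp only [absDesc_apply, sq_abs]
  exact Equiv.sum_comp (absDescPerm x) (fun j => x j ^ 2)

lemma sum_mul_le_sum_absDesc_mul (x y : Fin n → ℝ) :
    ∑ i, x i * y i ≤ ∑ i, absDesc x i * absDesc y i := by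
  calc ∑ i, x i * y i ≤ ∑ i, |y i| * |x i| :=
        sum_le_sum fun i _ => by rw [← abs_mul, mul_comm]; exact le_abs_self _
    _ = ∑ i, absDesc y i * |x (absDescPerm y i)| :=
        (Equiv.sum_comp (absDescPerm y) fun j => |y j| * |x j|).symm
    _ ≤ ∑ i, absDesc y i * absDesc x i :=
        sum_mul_abs_comp_perm_le (antitone_absDesc y) x _
    _ = ∑ i, absDesc x i * absDesc y i := by simp only [mul_comm]

lemma sum_sq_absDesc_sub_le (x y : Fin n → ℝ) :
    ∑ i, (absDesc x i - absDesc y i) ^ 2 ≤ ∑ i, (x i - y i) ^ 2 := by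
  rw [sum_sub_sq_eq, sum_sub_sq_eq, sum_sq_absDesc, sum_sq_absDesc]
  linarith [sum_mul_le_sum_absDesc_mul x y]

end Rearrangement

lemma kappa_convexOn {n : ℕ} {lam : Fin n → ℝ} (hlam : Antitone lam) (hlam₀ : ∀ i, 0 ≤ lam i) :
    ConvexOn ℝ Set.univ (kappa lam) := by
  refine ⟨convex_univ, fun x _ y _ a c ha hc _ => ?_⟩
  set z := a • x + c • y
  calc kappa lam z = ∑ i, lam i * |z (absDescPerm z i)| := rfl
    _ ≤ ∑ i, (a * (lam i * |x (absDescPerm z i)|) + c * (lam i * |y (absDescPerm z i)|)) := by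
        refine sum_le_sum fun i _ => ?_
        have := abs_add_le (a * x (absDescPerm z i)) (c * y (absDescPerm z i))
        rw [abs_mul, abs_mul, abs_of_nonneg ha, abs_of_nonneg hc] at this
        simp only [z, Pi.add_apply, Pi.smul_apply, smul_eq_mul]
        nlinarith [hlam₀ i]
    _ ≤ a • kappa lam x + c • kappa lam y := by
        rw [sum_add_distrib, ← mul_sum, ← mul_sum, smul_eq_mul, smul_eq_mul]
        gcongr
        · exact sum_mul_abs_comp_perm_le hlam x _
        · exact sum_mul_abs_comp_perm_le hlam y _

section SignedPerm

variable {n : ℕ} {P : Matrix (Fin n) (Fin n) ℝ} {σ : Equiv.Perm (Fin n)} {ε : Fin n → ℝ}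

lemma mulVec_apply_of_signedPerm (hP : ∀ i j, P i j = if j = σ i then ε i else 0)
    (v : Fin n → ℝ) (i : Fin n) : (P *ᵥ v) i = ε i * v (σ i) := by
  simp [mulVec, dotProduct, hP]

lemma transpose_mulVec_apply_of_signedPerm (hP : ∀ i j, P i j = if j = σ i then ε i else 0)
    (v : Fin n → ℝ) (i : Fin n) : (Pᵀ *ᵥ v) (σ i) = ε i * v i := by
  simp [mulVec, dotProduct, hP]

lemma IsSignedPerm.sum_sq_transpose_mulVec_sub (hP : IsSignedPerm P) (u v : Fin n → ℝ) :
    ∑ i, ((Pᵀ *ᵥ u) i - v i) ^ 2 = ∑ i, (u i - (P *ᵥ v) i) ^ 2 := by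
  obtain ⟨σ, ε, hε, hPσ⟩ := hP
  rw [← Equiv.sum_comp σ]
  refine sum_congr rfl fun i _ => ?_
  rw [transpose_mulVec_apply_of_signedPerm hPσ, mulVec_apply_of_signedPerm hPσ]
  rcases hε i with h | h <;> rw [h] <;> ring

lemma IsSignedPerm.absDesc_transpose_mulVec (hP : IsSignedPerm P) (u : Fin n → ℝ) :
    absDesc (Pᵀ *ᵥ u) = absDesc u := by
  obtain ⟨σ, ε, hε, hPσ⟩ := hP
  refine absDesc_eq_of_abs_comp_perm σ fun i => ?_
  rw [transpose_mulVec_apply_of_signedPerm hPσ, abs_mul]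
  rcases hε i with h | h <;> simp [h]

end SignedPerm

section Projection

variable {n : ℕ} {S : Set (Fin n → ℝ)} {b p x : Fin n → ℝ}

lemma IsMinimizer.sum_sub_sq_le (hp : IsMinimizer S b p) (hx : x ∈ S) :
    ∑ i, (p i - b i) ^ 2 ≤ ∑ i, (x i - b i) ^ 2 := by
  linarith [hp.2 x hx]

lemma IsMinimizer.eq_of_sum_sub_sq_le (hS : Convex ℝ S) (hp : IsMinimizer S b p) (hx : x ∈ S)
    (hle : ∑ i, (x i - b i) ^ 2 ≤ ∑ i, (p i - b i) ^ 2) : x = p := by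
  have hm : (1 / 2 : ℝ) • p + (1 / 2 : ℝ) • x ∈ S :=
    hS hp.1 hx (by norm_num) (by norm_num) (by norm_num)
  -- parallelogram law at the midpoint
  have hmid : ∑ i, (((1 / 2 : ℝ) • p + (1 / 2 : ℝ) • x) i - b i) ^ 2 =
      (∑ i, (p i - b i) ^ 2 + ∑ i, (x i - b i) ^ 2) / 2 - (∑ i, (x i - p i) ^ 2) / 4 := by
    simp only [Pi.add_apply, Pi.smul_apply, smul_eq_mul, ← sum_add_distrib, sum_div,
      ← sum_sub_distrib]
    exact sum_congr rfl fun i _ => by ring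
  have := hp.sum_sub_sq_le hm
  exact eq_of_sum_sub_sq_nonpos (by linarith)

/-- Otherwise moving the projection a little towards `b` would keep it feasible and bring it
closer to `b`. -/
lemma IsMinimizer.apply_eq_of_lt {f : (Fin n → ℝ) → ℝ} {τ : ℝ} (hf : ConvexOn ℝ Set.univ f)
    (hp : IsMinimizer {x | f x ≤ τ} b p) (hb : τ < f b) : f p = τ := by
  refine le_antisymm hp.1 (not_lt.1 fun hlt => ?_)
  have hfpb : f p < f b := (hp.1 : f p ≤ τ).trans_lt hb
  set t := (τ - f p) / (f b - f p)
  have ht : t * (f b - f p) = τ - f p := div_mul_cancel₀ _ (by linarith)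
  have ht₀ : 0 < t := div_pos (by linarith) (by linarith)
  have ht₁ : t < 1 := (div_lt_one (by linarith)).2 (by linarith)
  have hfeas : f ((1 - t) • p + t • b) ≤ τ := by
    have hcvx := hf.2 (Set.mem_univ p) (Set.mem_univ b) (sub_nonneg.2 ht₁.le) ht₀.le
      (sub_add_cancel 1 t)
    simp only [smul_eq_mul] at hcvx
    linarith
  have hdist :
      ∑ i, (((1 - t) • p + t • b) i - b i) ^ 2 = (1 - t) ^ 2 * ∑ i, (p i - b i) ^ 2 := by
    simp only [Pi.add_apply, Pi.smul_apply, smul_eq_mul, mul_sum]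
    exact sum_congr rfl fun i _ => by ring
  have hle := hp.sum_sub_sq_le hfeas
  rw [hdist] at hle
  have hpb : p = b := eq_of_sum_sub_sq_nonpos <| by
    by_contra! hpos
    nlinarith [mul_pos hpos (by nlinarith : 0 < 1 - (1 - t) ^ 2)]
  exact hfpb.ne (congrArg f hpb)

end Projection

theorem stmt1_general {n : ℕ} (lam : Fin n → ℝ)
    (hmono : ∀ i j : Fin n, i ≤ j → lam j ≤ lam i)
    (hnonneg : ∀ i, 0 ≤ lam i)
    (τ : ℝ)
    (b : Fin n → ℝ) (hb : τ < kappa lam b)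
    (P : Matrix (Fin n) (Fin n) ℝ) (hP : IsSignedPerm P) (hPb : P.mulVec b = absDesc b)
    (p q : Fin n → ℝ)
    (hp : IsMinimizer {x | kappa lam x ≤ τ} b p)
    (hq : IsMinimizer {x | x ∈ coneC n ∧ ∑ i, lam i * x i = τ} (P.mulVec b) q) :
    p = Matrix.mulVec Pᵀ q := by
  have hκ := kappa_convexOn (fun i j h => hmono i j h) hnonneg
  have hpτ : kappa lam p = τ := hp.apply_eq_of_lt hκ hb
  obtain ⟨hqC, hqτ⟩ := hq.1
  have hr : kappa lam (Pᵀ *ᵥ q) ≤ τ := by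
    rw [kappa, hP.absDesc_transpose_mulVec, absDesc_eq_self (fun i j h => hqC.1 i j h) hqC.2, hqτ]
  have hpC : absDesc p ∈ {x | x ∈ coneC n ∧ ∑ i, lam i * x i = τ} :=
    ⟨⟨fun _ _ h => antitone_absDesc p h, absDesc_nonneg p⟩, hpτ⟩
  refine (hp.eq_of_sum_sub_sq_le (by simpa using hκ.convex_le τ) hr ?_).symm
  calc ∑ i, ((Pᵀ *ᵥ q) i - b i) ^ 2 = ∑ i, (q i - (P *ᵥ b) i) ^ 2 :=
        hP.sum_sq_transpose_mulVec_sub q b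
    _ ≤ ∑ i, (absDesc p i - (P *ᵥ b) i) ^ 2 := hq.sum_sub_sq_le hpC
    _ ≤ ∑ i, (p i - b i) ^ 2 := hPb ▸ sum_sq_absDesc_sub_le p b

/-- if `κ_λ(b) > τ`, then `Π_{Δ_τ}(b) = Pᵀ x_λ(P b)` for every `P ∈ Πˢ(b)`. -/
theorem stmt1 {n : ℕ} (hn : 0 < n) (lam : Fin n → ℝ)
    (hmono : ∀ i j : Fin n, i ≤ j → lam j ≤ lam i)
    (hnonneg : ∀ i, 0 ≤ lam i) (hlam : lam ≠ 0)
    (τ : ℝ) (hτ : 0 < τ)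
    (b : Fin n → ℝ) (hb : τ < kappa lam b)
    (P : Matrix (Fin n) (Fin n) ℝ) (hP : IsSignedPerm P) (hPb : P.mulVec b = absDesc b)
    (p q : Fin n → ℝ)
    (hp : IsMinimizer {x | kappa lam x ≤ τ} b p)
    (hq : IsMinimizer {x | x ∈ coneC n ∧ ∑ i, lam i * x i = τ} (P.mulVec b) q) :
    p = Matrix.mulVec Pᵀ q :=
  stmt1_general lam hmono hnonneg τ b hb P hP hPb p q hp hq
end

section
/- For every b ∈ ℝ^n and every signed permutation matrix P ∈ Π^s(b), it holds that P · Π_{Δ_τ}(b) = Π_{Δ_τ}(Pb); that is, P · Π_{Δ_τ}(b) is the unique minimizer of ½‖x − Pb‖² over {x ∈ ℝ^n : κ_λ(x) ≤ τ}. -/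
open Matrix

noncomputable def absPerm {n : ℕ} (x : Fin n → ℝ) : Equiv.Perm (Fin n) :=
  (Fin.revPerm).trans (Tuple.sort fun j => |x j|)

lemma absDesc_eq_comp {n : ℕ} (x : Fin n → ℝ) (i : Fin n) :
    absDesc x i = |x (absPerm x i)| := rfl

lemma absDesc_antitone {n : ℕ} (x : Fin n → ℝ) : Antitone (absDesc x) := by
  intro i j hij
  have h := Tuple.monotone_sort (fun j => |x j|) (Fin.rev_le_rev.2 hij)
  simpa [absDesc, Function.comp] using h

lemma monovary_lam_absDesc {n : ℕ} (lam : Fin n → ℝ)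
    (hmono : ∀ i j : Fin n, i ≤ j → lam j ≤ lam i) (x : Fin n → ℝ) :
    Monovary lam (absDesc x) := by
  intro i j h
  by_contra hc
  push_neg at hc
  have hji : ¬ i ≤ j := fun hle => absurd (absDesc_antitone x hle) (not_le.2 h)
  exact absurd (hmono j i (le_of_not_ge hji)) (not_le.2 hc)

lemma sum_abs_comp_le_kappa {n : ℕ} (lam : Fin n → ℝ)
    (hmono : ∀ i j : Fin n, i ≤ j → lam j ≤ lam i)
    (x : Fin n → ℝ) (σ : Equiv.Perm (Fin n)) :
    ∑ i, lam i * |x (σ i)| ≤ kappa lam x := by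
  have key : ∀ i, |x (σ i)| = absDesc x ((absPerm x).symm (σ i)) := by
    intro i; rw [absDesc_eq_comp, Equiv.apply_symm_apply]
  calc ∑ i, lam i * |x (σ i)| = ∑ i, lam i * absDesc x ((σ.trans (absPerm x).symm) i) := by
        simp only [key]; rfl
    _ ≤ ∑ i, lam i * absDesc x i :=
        (monovary_lam_absDesc lam hmono x).sum_mul_comp_perm_le_sum_mul
          (σ := σ.trans (absPerm x).symm)
    _ = kappa lam x := rfl

lemma kappa_le_of_abs_comp {n : ℕ} (lam : Fin n → ℝ)
    (hmono : ∀ i j : Fin n, i ≤ j → lam j ≤ lam i)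
    (x y : Fin n → ℝ) (σ : Equiv.Perm (Fin n)) (h : ∀ i, |y i| = |x (σ i)|) :
    kappa lam y ≤ kappa lam x := by
  have : kappa lam y = ∑ i, lam i * |x (σ (absPerm y i))| := by
    unfold kappa; congr 1; funext i; rw [absDesc_eq_comp, h]
  rw [this]
  exact sum_abs_comp_le_kappa lam hmono x ((absPerm y).trans σ)

lemma kappa_signed_perm_eq {n : ℕ} (lam : Fin n → ℝ)
    (hmono : ∀ i j : Fin n, i ≤ j → lam j ≤ lam i)
    (x : Fin n → ℝ) (σ : Equiv.Perm (Fin n)) (ε : Fin n → ℝ)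
    (hε : ∀ i, ε i = 1 ∨ ε i = -1) :
    kappa lam (fun i => ε i * x (σ i)) = kappa lam x := by
  have habs : ∀ i, |ε i * x (σ i)| = |x (σ i)| := by
    intro i
    rcases hε i with h | h <;> simp [h, abs_mul]
  refine le_antisymm (kappa_le_of_abs_comp lam hmono x _ σ habs) ?_
  refine kappa_le_of_abs_comp lam hmono _ x σ.symm ?_
  intro j
  rw [show |(fun i => ε i * x (σ i)) (σ.symm j)| = |x j| by
    simpa [Equiv.apply_symm_apply] using habs (σ.symm j)]

lemma kappa_midpoint_le {n : ℕ} (lam : Fin n → ℝ)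
    (hmono : ∀ i j : Fin n, i ≤ j → lam j ≤ lam i) (hnonneg : ∀ i, 0 ≤ lam i)
    (u v : Fin n → ℝ) :
    kappa lam (fun i => (u i + v i) / 2) ≤ (kappa lam u + kappa lam v) / 2 := by
  set m : Fin n → ℝ := fun i => (u i + v i) / 2 with hm
  have h1 : kappa lam m = ∑ i, lam i * |m (absPerm m i)| := by
    unfold kappa; congr 1
  have h2 : kappa lam m ≤ ∑ i, lam i * ((|u (absPerm m i)| + |v (absPerm m i)|) / 2) := by
    rw [h1]
    refine Finset.sum_le_sum fun i _ => ?_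
    refine mul_le_mul_of_nonneg_left ?_ (hnonneg i)
    rw [hm]
    calc |(u (absPerm m i) + v (absPerm m i)) / 2|
        = |u (absPerm m i) + v (absPerm m i)| / 2 := by rw [abs_div]; norm_num
      _ ≤ (|u (absPerm m i)| + |v (absPerm m i)|) / 2 := by
          apply div_le_div_of_nonneg_right (abs_add_le _ _) (by norm_num) |>.trans_eq rfl
  calc kappa lam m ≤ ∑ i, lam i * ((|u (absPerm m i)| + |v (absPerm m i)|) / 2) := h2
    _ = ((∑ i, lam i * |u (absPerm m i)|) + ∑ i, lam i * |v (absPerm m i)|) / 2 := by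
        rw [← Finset.sum_add_distrib, Finset.sum_div]
        congr 1; funext i; ring
    _ ≤ (kappa lam u + kappa lam v) / 2 := by
        apply div_le_div_of_nonneg_right _ (by norm_num)
        exact add_le_add (sum_abs_comp_le_kappa lam hmono u (absPerm m))
          (sum_abs_comp_le_kappa lam hmono v (absPerm m))


/-- for every `b` and every `P ∈ Πˢ(b)`, `P · Π_{Δ_τ}(b)` is the unique
minimizer of `½‖x − Pb‖²` over `Δ_τ`, i.e. `P · Π_{Δ_τ}(b) = Π_{Δ_τ}(Pb)`. -/
theorem stmt2 {n : ℕ} (hn : 0 < n) (lam : Fin n → ℝ)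
    (hmono : ∀ i j : Fin n, i ≤ j → lam j ≤ lam i)
    (hnonneg : ∀ i, 0 ≤ lam i) (hlam : lam ≠ 0)
    (τ : ℝ) (hτ : 0 < τ)
    (b : Fin n → ℝ)
    (P : Matrix (Fin n) (Fin n) ℝ) (hP : IsSignedPerm P) (hPb : P.mulVec b = absDesc b)
    (p : Fin n → ℝ)
    (hp : IsMinimizer {x | kappa lam x ≤ τ} b p) :
    IsMinimizer {x | kappa lam x ≤ τ} (P.mulVec b) (P.mulVec p) ∧
      ∀ q : Fin n → ℝ, IsMinimizer {x | kappa lam x ≤ τ} (P.mulVec b) q → q = P.mulVec p := by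
  obtain ⟨σ, ε, hε, hPij⟩ := hP
  have hε2 : ∀ i, ε i * ε i = 1 := by
    intro i; rcases hε i with h | h <;> simp [h]
  -- mulVec formula
  have hmv : ∀ x : Fin n → ℝ, ∀ i, P.mulVec x i = ε i * x (σ i) := by
    intro x i
    simp only [mulVec, dotProduct, hPij, ite_mul, zero_mul]
    rw [Finset.sum_ite_eq' Finset.univ (σ i) (fun j => ε i * x j)]
    simp
  -- inverse map
  set T' : (Fin n → ℝ) → (Fin n → ℝ) := fun y j => ε (σ.symm j) * y (σ.symm j) with hT'
  have hTT' : ∀ y, P.mulVec (T' y) = y := by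
    intro y; funext i
    rw [hmv]
    simp [hT', Equiv.symm_apply_apply, ← mul_assoc, hε2]
  have hT'T : ∀ x, T' (P.mulVec x) = x := by
    intro x; funext j
    simp [hT', hmv, Equiv.apply_symm_apply, ← mul_assoc, hε2]
  -- kappa invariance
  have hkP : ∀ x, kappa lam (P.mulVec x) = kappa lam x := by
    intro x
    have : P.mulVec x = fun i => ε i * x (σ i) := funext (hmv x)
    rw [this]
    exact kappa_signed_perm_eq lam hmono x σ ε hε
  have hkT' : ∀ y, kappa lam (T' y) = kappa lam y := by
    intro y
    conv_rhs => rw [← hTT' y]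
    rw [hkP]
  -- distance invariance
  have hdist : ∀ x y : Fin n → ℝ,
      ∑ i, (P.mulVec x i - P.mulVec y i)^2 = ∑ i, (x i - y i)^2 := by
    intro x y
    have : ∀ i, (P.mulVec x i - P.mulVec y i)^2 = (x (σ i) - y (σ i))^2 := by
      intro i
      rw [hmv, hmv, ← mul_sub, mul_pow]
      rcases hε i with h | h <;> simp [h]
    rw [Finset.sum_congr rfl fun i _ => this i]
    exact Equiv.sum_comp σ (fun j => (x j - y j)^2)
  obtain ⟨hpS, hpmin⟩ := hp
  have hPpmin : IsMinimizer {x | kappa lam x ≤ τ} (P.mulVec b) (P.mulVec p) := by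
    constructor
    · show kappa lam (P.mulVec p) ≤ τ
      rw [hkP]; exact hpS
    · intro x hx
      have hT'xS : kappa lam (T' x) ≤ τ := by rw [hkT']; exact hx
      have h1 := hpmin (T' x) hT'xS
      have h2 : ∑ i, (x i - P.mulVec b i)^2 = ∑ i, (T' x i - b i)^2 := by
        conv_lhs => rw [← hTT' x]
        exact hdist (T' x) b
      have h3 := hdist p b
      rw [h3, h2]
      exact h1
  refine ⟨hPpmin, ?_⟩
  intro q ⟨hqS, hqmin⟩
  -- both q and P.mulVec p are minimizers; use strict convexity via midpoint
  set c := P.mulVec b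
  set r := P.mulVec p with hr
  have hrS : kappa lam r ≤ τ := hPpmin.1
  have heq : ∑ i, (q i - c i)^2 = ∑ i, (r i - c i)^2 := by
    have h1 := hqmin r hrS
    have h2 := hPpmin.2 q hqS
    linarith
  set m : Fin n → ℝ := fun i => (q i + r i) / 2 with hmdef
  have hq' : kappa lam q ≤ τ := hqS
  have hmS : kappa lam m ≤ τ := by
    calc kappa lam m ≤ (kappa lam q + kappa lam r) / 2 :=
          kappa_midpoint_le lam hmono hnonneg q r
      _ ≤ τ := by linarith
  have hpar : ∑ i, (m i - c i)^2 =
      ((∑ i, (q i - c i)^2) + ∑ i, (r i - c i)^2) / 2 - (∑ i, (q i - r i)^2) / 4 := by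
    rw [← Finset.sum_add_distrib, Finset.sum_div, Finset.sum_div, ← Finset.sum_sub_distrib]
    refine Finset.sum_congr rfl fun i _ => ?_
    simp only [hmdef]; ring
  have hmin := hqmin m hmS
  have hsum0 : ∑ i, (q i - r i)^2 ≤ 0 := by
    rw [hpar, heq] at hmin
    linarith
  have : ∀ i ∈ Finset.univ, (q i - r i)^2 = 0 := by
    rw [← Finset.sum_eq_zero_iff_of_nonneg (fun i _ => sq_nonneg _)]
    exact le_antisymm hsum0 (Finset.sum_nonneg fun i _ => sq_nonneg _)
  funext i
  have := this i (Finset.mem_univ i)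
  have := pow_eq_zero_iff (n := 2) (by norm_num) |>.1 this
  linarith
end

section
/- Let b ∈ C. Then every entry of Π_{Δ_τ}(b) is nonnegative; that is, (Π_{Δ_τ}(b))_i ≥ 0 for all 1 ≤ i ≤ n. -/
open Matrix

/-- The permutation `i ↦ sort(|x|)(i.rev)` realizing `absDesc`. -/
noncomputable def descPerm {n : ℕ} (x : Fin n → ℝ) : Equiv.Perm (Fin n) :=
  (Fin.revPerm).trans (Tuple.sort fun j => |x j|)

lemma absDesc_eq_perm {n : ℕ} (x : Fin n → ℝ) (i : Fin n) :
    absDesc x i = |x (descPerm x i)| := rfl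

lemma absDesc_le_absDesc {n : ℕ} {x y : Fin n → ℝ}
    (h : ∀ k, |x k| ≤ |y k|) (i : Fin n) : absDesc x i ≤ absDesc y i := by
  classical
  -- S : top (i+1) indices for x
  set ex := descPerm x
  set ey := descPerm y
  set S : Finset (Fin n) := (Finset.Iic i).image ex with hS
  set T : Finset (Fin n) := (Finset.Iio i).image ey with hT
  have hcard : T.card < S.card := by
    rw [hS, hT, Finset.card_image_of_injective _ ex.injective,
      Finset.card_image_of_injective _ ey.injective, Fin.card_Iic, Fin.card_Iio]
    omega
  have hns : ¬ S ⊆ T := fun hsub => absurd (Finset.card_le_card hsub) (not_le.mpr hcard)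
  obtain ⟨s, hsS, hsT⟩ := Finset.not_subset.mp hns
  obtain ⟨j, hj, rfl⟩ := Finset.mem_image.mp hsS
  have hj' : j ≤ i := Finset.mem_Iic.mp hj
  -- rank of ex j under ey is ≥ i
  have hrank : i ≤ ey.symm (ex j) := by
    by_contra hlt
    push_neg at hlt
    exact hsT (Finset.mem_image.mpr ⟨ey.symm (ex j), Finset.mem_Iio.mpr hlt, (ey.apply_symm_apply _)⟩)
  calc absDesc x i ≤ absDesc x j := absDesc_antitone x hj'
    _ = |x (ex j)| := absDesc_eq_perm x j
    _ ≤ |y (ex j)| := h _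
    _ = absDesc y (ey.symm (ex j)) := by rw [absDesc_eq_perm, ey.apply_symm_apply]
    _ ≤ absDesc y i := absDesc_antitone y hrank

lemma kappa_le_kappa {n : ℕ} (lam : Fin n → ℝ) (hnonneg : ∀ i, 0 ≤ lam i)
    {x y : Fin n → ℝ} (h : ∀ k, |x k| ≤ |y k|) : kappa lam x ≤ kappa lam y :=
  Finset.sum_le_sum fun i _ =>
    mul_le_mul_of_nonneg_left (absDesc_le_absDesc h i) (hnonneg i)

/-- for `b ∈ C`, every entry of `Π_{Δ_τ}(b)` is nonnegative. -/
theorem stmt4 {n : ℕ} (hn : 0 < n) (lam : Fin n → ℝ)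
    (hmono : ∀ i j : Fin n, i ≤ j → lam j ≤ lam i)
    (hnonneg : ∀ i, 0 ≤ lam i) (hlam : lam ≠ 0)
    (τ : ℝ) (hτ : 0 < τ)
    (b : Fin n → ℝ) (hbC : b ∈ coneC n)
    (p : Fin n → ℝ) (hp : IsMinimizer {x | kappa lam x ≤ τ} b p) :
    ∀ i, 0 ≤ p i := by
  intro i0
  by_contra hneg
  push_neg at hneg
  set m : Fin n → ℝ := fun i => max (p i) 0 with hm
  have habs : ∀ k, |m k| ≤ |p k| := by
    intro k
    rw [hm]
    simp only
    rw [abs_of_nonneg (le_max_right _ _)]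
    rcases le_or_gt 0 (p k) with h | h
    · simp [max_eq_left h, abs_of_nonneg h]
    · simp [max_eq_right h.le, abs_nonneg]
  have hmS : kappa lam m ≤ τ :=
    le_trans (kappa_le_kappa lam hnonneg habs) hp.1
  have hb : ∀ i, 0 ≤ b i := hbC.2
  have hlt : ∑ i, (m i - b i)^2 < ∑ i, (p i - b i)^2 := by
    apply Finset.sum_lt_sum
    · intro i _
      rcases le_or_gt 0 (p i) with h | h
      · simp [hm, max_eq_left h]
      · have : m i = 0 := max_eq_right h.le
        rw [this]
        nlinarith [hb i, h]
    · refine ⟨i0, Finset.mem_univ _, ?_⟩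
      have : m i0 = 0 := max_eq_right hneg.le
      rw [this]
      nlinarith [hb i0]
  have := hp.2 m hmS
  linarith
end

section
/- Every feasible solution of the system ⟨λ, x⟩ = τ, x ∈ C is constraint nondegenerate: for every x̃ ∈ C with ⟨λ, x̃⟩ = τ and every u ∈ ℝ, there exists d ∈ ℝ^n such that ⟨λ, d⟩ = u and (Bd)_i = 0 for every index i with (Bx̃)_i = 0. Equivalently, λᵀ lin T_C(x̃) = ℝ, where lin T_C(x̃) = {d ∈ ℝ^n : (Bd)_i = 0 for all i ∈ I(x̃)} is the lineality space of the tangent cone of C at x̃ and I(x̃) = {i : (Bx̃)_i = 0}. -/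
open Matrix

/-- The matrix `B` with `(Bx)_i = x_i − x_{i+1}` for `1 ≤ i ≤ n−1` and `(Bx)_n = x_n`. -/
def Bmat (n : ℕ) : Matrix (Fin n) (Fin n) ℝ :=
  Matrix.of fun i j => if j = i then 1 else if (j : ℕ) = (i : ℕ) + 1 then -1 else 0

/-- every feasible solution of `⟨λ, x⟩ = τ, x ∈ C` is constraint
nondegenerate: for every `u ∈ ℝ` there is `d` with `⟨λ, d⟩ = u` and `(Bd)_i = 0`
for all active indices `i` (those with `(Bx̃)_i = 0`). -/
theorem stmt6 {n : ℕ} (hn : 0 < n) (lam : Fin n → ℝ)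
    (hmono : ∀ i j : Fin n, i ≤ j → lam j ≤ lam i)
    (hnonneg : ∀ i, 0 ≤ lam i) (hlam : lam ≠ 0)
    (τ : ℝ) (hτ : 0 < τ)
    (xt : Fin n → ℝ) (hxC : xt ∈ coneC n) (hfeas : ∑ i, lam i * xt i = τ)
    (u : ℝ) :
    ∃ d : Fin n → ℝ, ∑ i, lam i * d i = u ∧
      ∀ i, (Bmat n).mulVec xt i = 0 → (Bmat n).mulVec d i = 0 := by
  refine ⟨(u / τ) • xt, ?_, ?_⟩
  · have : ∑ i, lam i * ((u / τ) • xt) i = (u / τ) * ∑ i, lam i * xt i := by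
      rw [Finset.mul_sum]; congr 1; ext i; simp [Pi.smul_apply]; ring
    rw [this, hfeas, div_mul_cancel₀ _ hτ.ne']
  · intro i hi
    have : (Bmat n).mulVec ((u / τ) • xt) i = (u / τ) * (Bmat n).mulVec xt i := by
      simp [Matrix.mulVec_smul]
    rw [this, hi, mul_zero]
end

section
/- Let λ ∈ ℝ^n be nonzero with λ_1 ≥ λ_2 ≥ … ≥ λ_n ≥ 0 and let I be any proper subset of {1,…,n} (possibly empty). Then λ is not in the linear span of the rows of B indexed by I; equivalently, λ together with the rows {B_{i,·} : i ∈ I} (viewed as vectors in ℝ^n) forms a linearly independent family, so the (1+|I|)×n matrix obtained by stacking λᵀ on top of B_I has full row rank 1+|I|. -/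
/-!
The prefix-sum functional `v ↦ ∑_{j ≤ k} v_j` sends row `i` of `B` to `[i = k]`
(equivalently, `B` times the upper-triangular all-ones matrix is the identity, so `B` is
invertible). Taking `k ∉ I`, it kills every row `B_i` with `i ∈ I`, but it is positive on `λ`:
since `λ` is antitone, nonnegative and nonzero, `λ_1 > 0`. Hence `λ` is outside the span of
the rows `B_I`, and adjoining it to these (linearly independent) rows keeps them independent.
-/

open Matrix

open Finset

lemma Bmat_apply {n : ℕ} (i j : Fin n) :
    Bmat n i j = (if (j : ℕ) = i then 1 else 0) - (if (j : ℕ) = i + 1 then 1 else 0) := by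
  simp only [Bmat, of_apply, Fin.ext_iff]
  grind

lemma sum_Iic_Bmat {n : ℕ} (i k : Fin n) :
    ∑ j ∈ Iic k, Bmat n i j = if i = k then 1 else 0 := by
  have hval : ∑ j ∈ Iic k, Bmat n i j
      = ∑ m ∈ Iic (k : ℕ), ((if m = i then 1 else 0) - (if m = i + 1 then 1 else 0) : ℝ) := by
    rw [← Fin.map_valEmbedding_Iic, sum_map]
    exact sum_congr rfl fun j _ => Bmat_apply i j
  rw [hval, sum_sub_distrib, sum_ite_eq', sum_ite_eq']
  simp only [mem_Iic, Fin.ext_iff]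
  split_ifs <;> norm_num <;> omega

lemma Bmat_mul_of_le_eq_one (n : ℕ) :
    Bmat n * Matrix.of (fun j k : Fin n => if j ≤ k then (1 : ℝ) else 0) = 1 := by
  ext i k
  simp only [mul_apply, of_apply, mul_ite, mul_one, mul_zero, ← sum_filter, one_apply]
  rw [filter_ge_eq_Iic, sum_Iic_Bmat]

lemma linearIndependent_Bmat_rows (n : ℕ) : LinearIndependent ℝ (Bmat n).row :=
  linearIndependent_rows_iff_isUnit.mpr <|
    (isUnit_iff_isUnit_det _).mpr (isUnit_det_of_right_inverse (Bmat_mul_of_le_eq_one n))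

lemma sum_Iic_pos_of_antitone {α M : Type*} [LinearOrder α] [LocallyFiniteOrderBot α]
    [AddCommMonoid M] [PartialOrder M] [IsOrderedCancelAddMonoid M] {f : α → M}
    (hf : Antitone f) (h0 : 0 ≤ f) (hne : f ≠ 0) (k : α) : 0 < ∑ j ∈ Iic k, f j := by
  obtain ⟨i, hi⟩ := Function.ne_iff.mp hne
  refine sum_pos' (fun j _ => h0 j) ⟨min i k, mem_Iic.mpr (min_le_right i k), ?_⟩
  exact ((h0 i).lt_of_ne' hi).trans_le (hf (min_le_left i k))

lemma notMem_span_of_map_eq_zero {R M : Type*} [Semiring R] [AddCommMonoid M] [Module R M]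
    {s : Set M} {x : M} (f : M →ₗ[R] R) (hs : ∀ v ∈ s, f v = 0) (hx : f x ≠ 0) :
    x ∉ Submodule.span R s := fun hmem =>
  hx (Submodule.span_le.mpr (fun v hv => LinearMap.mem_ker.mpr (hs v hv)) hmem)

theorem stmt7_general {n : ℕ} (lam : Fin n → ℝ)
    (hmono : ∀ i j : Fin n, i ≤ j → lam j ≤ lam i)
    (hnonneg : ∀ i, 0 ≤ lam i) (hlam : lam ≠ 0)
    (I : Finset (Fin n)) (hI : I ≠ Finset.univ) :
    lam ∉ Submodule.span ℝ {v : Fin n → ℝ | ∃ i ∈ I, v = fun j => Bmat n i j} ∧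
      LinearIndependent ℝ
        (fun o : Option {i // i ∈ I} =>
          Option.elim o lam (fun i => fun j => Bmat n i.1 j)) := by
  obtain ⟨k, hk⟩ : ∃ k, k ∉ I := by simpa [eq_univ_iff_forall] using hI
  let prefixSum : (Fin n → ℝ) →ₗ[ℝ] ℝ := ∑ j ∈ Iic k, LinearMap.proj j
  have hnot : lam ∉ Submodule.span ℝ {v : Fin n → ℝ | ∃ i ∈ I, v = fun j => Bmat n i j} := by
    refine notMem_span_of_map_eq_zero prefixSum ?_ ?_
    · rintro _ ⟨i, hi, rfl⟩
      simp [prefixSum, sum_Iic_Bmat, ne_of_mem_of_not_mem hi hk]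
    · simpa [prefixSum] using (sum_Iic_pos_of_antitone hmono hnonneg hlam k).ne'
  have hrows : Set.range (fun i : I => Bmat n i) = {v | ∃ i ∈ I, v = fun j => Bmat n i j} := by
    ext v; simp [eq_comm]
  refine ⟨hnot, ?_⟩
  have hfamily : (fun o : Option I => Option.elim o lam fun i j => Bmat n i.1 j)
      = fun o => o.casesOn' lam ((Bmat n).row ∘ Subtype.val) := by
    funext o; cases o <;> rfl
  rw [hfamily]
  exact ((linearIndependent_Bmat_rows n).comp _ Subtype.val_injective).option (hrows ▸ hnot)

/-- for a nonzero `λ` with `λ₁ ≥ … ≥ λₙ ≥ 0` and a proper subset `I` of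
`{1,…,n}`, `λ` is not in the span of the rows of `B` indexed by `I`; equivalently,
`λ` together with those rows forms a linearly independent family (so the stacked
matrix `[λᵀ; B_I]` has full row rank `1 + |I|`). -/
theorem stmt7 {n : ℕ} (hn : 0 < n) (lam : Fin n → ℝ)
    (hmono : ∀ i j : Fin n, i ≤ j → lam j ≤ lam i)
    (hnonneg : ∀ i, 0 ≤ lam i) (hlam : lam ≠ 0)
    (I : Finset (Fin n)) (hI : I ≠ Finset.univ) :
    lam ∉ Submodule.span ℝ {v : Fin n → ℝ | ∃ i ∈ I, v = fun j => Bmat n i j} ∧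
      LinearIndependent ℝ
        (fun o : Option {i // i ∈ I} =>
          Option.elim o lam (fun i => fun j => Bmat n i.1 j)) :=
  stmt7_general lam hmono hnonneg hlam I hI
end

section
/- For every index set Γ ⊆ {1,…,n}, the matrix H = I_n − B_Γᵀ(B_Γ B_Γᵀ)^{−1} B_Γ (the orthogonal projection matrix onto the null space of B_Γ; equal to I_n when Γ = ∅) has all entries nonnegative: H_{ij} ≥ 0 for all 1 ≤ i, j ≤ n. -/
open Matrix

/-- `B_Γ`, the submatrix of `B` formed by the rows indexed by `Γ`. -/
def subRows {n : ℕ} (Γ : Finset (Fin n)) : Matrix {i // i ∈ Γ} (Fin n) ℝ :=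
  Matrix.of fun i j => Bmat n i.1 j

/-- `H = I_n − B_Γᵀ (B_Γ B_Γᵀ)⁻¹ B_Γ`, the orthogonal projection onto the null space of
`B_Γ` (equal to `I_n` when `Γ = ∅`). -/
noncomputable def Hmat {n : ℕ} (Γ : Finset (Fin n)) : Matrix (Fin n) (Fin n) ℝ :=
  1 - (subRows Γ)ᵀ * (subRows Γ * (subRows Γ)ᵀ)⁻¹ * subRows Γ

namespace Stmt11Aux

variable {n : ℕ} (Γ : Finset (Fin n))

/-- `t ∈ Γ` as a predicate on `ℕ`. -/
def inG (t : ℕ) : Prop := ∃ h : t < n, (⟨t, h⟩ : Fin n) ∈ Γ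

instance : DecidablePred (inG Γ) := fun t =>
  decidable_of_iff (if h : t < n then (⟨t, h⟩ : Fin n) ∈ Γ else False)
    (by by_cases h : t < n <;> simp [inG, h])

lemma inG_lt {t : ℕ} (h : inG Γ t) : t < n := h.1

lemma inG_coe (i : Fin n) : inG Γ i ↔ i ∈ Γ := by
  constructor
  · rintro ⟨h, hm⟩; rwa [Fin.eta] at hm
  · intro h; exact ⟨i.2, by rwa [Fin.eta]⟩

private lemma Rex (j : ℕ) : ∃ k, n ≤ j + k ∨ ¬ inG Γ (j + k) := ⟨n, Or.inl (by omega)⟩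
private lemma Lex (j : ℕ) : ∃ k, j - k = 0 ∨ ¬ inG Γ (j - k - 1) := ⟨j, Or.inl (by omega)⟩

/-- right end of the block of `j`. -/
def Rend (j : ℕ) : ℕ := j + Nat.find (Rex Γ j)

/-- left end of the block of `j`. -/
def Lstart (j : ℕ) : ℕ := j - Nat.find (Lex Γ j)

lemma le_Rend (j : ℕ) : j ≤ Rend Γ j := Nat.le_add_right _ _

lemma Rend_spec (j : ℕ) : n ≤ Rend Γ j ∨ ¬ inG Γ (Rend Γ j) := Nat.find_spec (Rex Γ j)

lemma Rend_le {j : ℕ} (hj : j ≤ n) : Rend Γ j ≤ n := by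
  have h := Nat.find_min' (Rex Γ j) (m := n - j) (Or.inl (by omega))
  unfold Rend; omega

lemma Rend_interior {j t : ℕ} (h1 : j ≤ t) (h2 : t < Rend Γ j) : inG Γ t := by
  have h := Nat.find_min (Rex Γ j) (m := t - j) (by unfold Rend at h2; omega)
  push_neg at h
  have := h.2
  rwa [show j + (t - j) = t by omega] at this

lemma Rend_eqc {j e : ℕ} (hje : j ≤ e) (hb : n ≤ e ∨ ¬ inG Γ e)
    (hint : ∀ t, j ≤ t → t < e → inG Γ t) : Rend Γ j = e := by
  have hle : Rend Γ j ≤ e := by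
    have h := Nat.find_min' (Rex Γ j) (m := e - j)
      (by rwa [show j + (e - j) = e by omega])
    unfold Rend; omega
  rcases lt_or_eq_of_le hle with hlt | h
  · exfalso
    have hin := hint _ (le_Rend Γ j) hlt
    have := inG_lt Γ hin
    rcases Rend_spec Γ j with h' | h' <;> [omega; exact h' hin]
  · exact h

lemma Lstart_le (j : ℕ) : Lstart Γ j ≤ j := Nat.sub_le _ _

lemma Lstart_spec (j : ℕ) : Lstart Γ j = 0 ∨ ¬ inG Γ (Lstart Γ j - 1) :=
  Nat.find_spec (Lex Γ j)

lemma Lstart_find_le (j : ℕ) : Nat.find (Lex Γ j) ≤ j :=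
  Nat.find_min' (Lex Γ j) (m := j) (Or.inl (by omega))

lemma Lstart_interior {j t : ℕ} (h1 : Lstart Γ j ≤ t) (h2 : t < j) : inG Γ t := by
  have hfle := Lstart_find_le Γ j
  have h := Nat.find_min (Lex Γ j) (m := j - t - 1) (by unfold Lstart at h1; omega)
  push_neg at h
  have := h.2
  rwa [show j - (j - t - 1) - 1 = t by omega] at this

lemma Lstart_eqc {j l : ℕ} (hlj : l ≤ j) (hb : l = 0 ∨ ¬ inG Γ (l - 1))
    (hint : ∀ t, l ≤ t → t < j → inG Γ t) : Lstart Γ j = l := by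
  have hge : l ≤ Lstart Γ j := by
    have h := Nat.find_min' (Lex Γ j) (m := j - l)
      (by rwa [show j - (j - l) = l by omega])
    have := Lstart_find_le Γ j
    unfold Lstart; omega
  rcases lt_or_eq_of_le hge with hlt | h
  · exfalso
    have hin := hint (Lstart Γ j - 1) (by omega) (by have := Lstart_le Γ j; omega)
    rcases Lstart_spec Γ j with h' | h' <;> [omega; exact h' hin]
  · exact h.symm

lemma Rend_congr {j a : ℕ} (h1 : Lstart Γ j ≤ a) (h2 : a ≤ Rend Γ j) :
    Rend Γ a = Rend Γ j := by
  apply Rend_eqc Γ h2 (Rend_spec Γ j)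
  intro t hta htr
  rcases le_or_gt j t with h | h
  · exact Rend_interior Γ h htr
  · exact Lstart_interior Γ (le_trans h1 hta) h

lemma Lstart_congr {j a : ℕ} (h1 : Lstart Γ j ≤ a) (h2 : a ≤ Rend Γ j) :
    Lstart Γ a = Lstart Γ j := by
  apply Lstart_eqc Γ h1 (Lstart_spec Γ j)
  intro t htl hta
  rcases lt_or_ge t j with h | h
  · exact Lstart_interior Γ htl h
  · exact Rend_interior Γ h (by omega)

lemma Lstart_eq_of_Rend_eq {a j : ℕ} (h : Rend Γ a = Rend Γ j) :
    Lstart Γ a = Lstart Γ j := by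
  rcases le_total a j with hle | hle
  · have hj : Lstart Γ a ≤ j := le_trans (Lstart_le Γ a) hle
    have hj2 : j ≤ Rend Γ a := h ▸ le_Rend Γ j
    rw [← Lstart_congr Γ hj hj2]
  · have hj : Lstart Γ j ≤ a := le_trans (Lstart_le Γ j) hle
    have hj2 : a ≤ Rend Γ j := h ▸ le_Rend Γ a
    rw [Lstart_congr Γ hj hj2]

lemma mem_of_Rend_eq {a j : ℕ} (h : Rend Γ a = Rend Γ j) :
    Lstart Γ j ≤ a ∧ a ≤ Rend Γ j := by
  have h1 := Lstart_eq_of_Rend_eq Γ h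
  exact ⟨h1 ▸ Lstart_le Γ a, h ▸ le_Rend Γ a⟩

lemma lt_Rend_of_inG {i : ℕ} (h : inG Γ i) : i < Rend Γ i := by
  have h1 := le_Rend Γ i
  rcases lt_or_eq_of_le h1 with h' | h'
  · exact h'
  · exfalso
    rcases Rend_spec Γ i with h2 | h2
    · have := inG_lt Γ h; omega
    · exact h2 (h' ▸ h)

lemma Rend_succ {i : ℕ} (h : inG Γ i) : Rend Γ (i + 1) = Rend Γ i := by
  have := lt_Rend_of_inG Γ h
  exact Rend_congr Γ (le_trans (Lstart_le Γ i) (by omega)) (by omega)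

/-- the explicit projection matrix entry: entry `(t, j)` of `P`. -/
noncomputable def Pent (j t : ℕ) : ℝ :=
  if Rend Γ t = Rend Γ j ∧ Rend Γ j ≠ n then
    ((Rend Γ j - Lstart Γ j + 1 : ℕ) : ℝ)⁻¹ else 0

/-- the explicit coefficient matrix entry: entry `(t, j)` of `A`. -/
noncomputable def Aent (j t : ℕ) : ℝ :=
  if Rend Γ t = Rend Γ j then
    (if j ≤ t then 1 else 0) -
      (if Rend Γ j ≠ n then
        ((t - Lstart Γ j + 1 : ℕ) : ℝ) / ((Rend Γ j - Lstart Γ j + 1 : ℕ) : ℝ)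
      else 0)
  else 0

noncomputable def Pmat : Matrix (Fin n) (Fin n) ℝ :=
  Matrix.of fun i j => Pent Γ (j : ℕ) (i : ℕ)

noncomputable def Amat : Matrix {i // i ∈ Γ} (Fin n) ℝ :=
  Matrix.of fun i j => Aent Γ (j : ℕ) (i.1 : ℕ)

lemma Pent_nonneg (j t : ℕ) : 0 ≤ Pent Γ j t := by
  unfold Pent
  split_ifs
  · positivity
  · exact le_refl 0

/-- core scalar computation for `B_Γ P = 0`. -/
lemma core1 {i j : ℕ} (hin : inG Γ i) :
    Pent Γ j i - (if i + 1 < n then Pent Γ j (i + 1) else 0) = 0 := by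
  have hi := inG_lt Γ hin
  by_cases h : i + 1 < n
  · rw [if_pos h]
    unfold Pent
    rw [Rend_succ Γ hin]
    ring
  · rw [if_neg h]
    have hR : Rend Γ i = n := by
      have h1 := lt_Rend_of_inG Γ hin
      have h2 := Rend_le Γ (le_of_lt hi)
      omega
    unfold Pent
    rw [if_neg]
    · ring
    · rintro ⟨h1, h2⟩; exact h2 (h1 ▸ hR)

/-- core scalar computation for `B_Γᵀ A = 1 - P`. -/
lemma core2 {a j : ℕ} (ha : a < n) (hj : j < n) :
    (if inG Γ a then Aent Γ j a else 0) -
      (if 0 < a ∧ inG Γ (a - 1) then Aent Γ j (a - 1) else 0)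
    = (if a = j then 1 else 0) - Pent Γ j a := by
  have hlj : Lstart Γ j ≤ j := Lstart_le Γ j
  have hjr : j ≤ Rend Γ j := le_Rend Γ j
  have hrn : Rend Γ j ≤ n := Rend_le Γ (le_of_lt hj)
  by_cases hA : Rend Γ a = Rend Γ j
  · -- a is in the block of j
    obtain ⟨hla, har⟩ := mem_of_Rend_eq Γ hA
    have hiff1 : inG Γ a ↔ a < Rend Γ j := by
      constructor
      · intro h
        have := lt_Rend_of_inG Γ h
        omega
      · intro h
        rcases le_or_gt j a with h' | h'
        · exact Rend_interior Γ h' h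
        · exact Lstart_interior Γ hla h'
    have hiff2 : (0 < a ∧ inG Γ (a - 1)) ↔ Lstart Γ j < a := by
      constructor
      · rintro ⟨h0, hin⟩
        by_contra hc
        have hal : a = Lstart Γ j := by omega
        rcases Lstart_spec Γ j with h' | h'
        · omega
        · rw [hal] at hin; exact h' hin
      · intro h
        refine ⟨by omega, ?_⟩
        rcases le_or_gt j (a - 1) with h' | h'
        · exact Rend_interior Γ h' (by omega)
        · exact Lstart_interior Γ (by omega) h'
    have hra1 : Lstart Γ j < a → Rend Γ (a - 1) = Rend Γ j := fun h =>
      Rend_congr Γ (by omega) (by omega)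
    by_cases hRn : Rend Γ j = n
    · -- zeroed block
      have hPa : Pent Γ j a = 0 := by
        unfold Pent; rw [if_neg (by tauto)]
      have hAa : Aent Γ j a = (if j ≤ a then 1 else 0) := by
        unfold Aent
        rw [if_pos hA]
        simp [hRn]
      have haG : inG Γ a := hiff1.2 (by omega)
      rw [hPa, hAa, if_pos haG]
      by_cases hla' : Lstart Γ j < a
      · rw [if_pos (hiff2.2 hla')]
        have hAa1 : Aent Γ j (a - 1) = (if j ≤ a - 1 then 1 else 0) := by
          unfold Aent
          rw [if_pos (hra1 hla')]
          simp [hRn]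
        rw [hAa1]
        split_ifs <;> first | omega | norm_num
      · rw [if_neg (fun hc => hla' (hiff2.1 hc))]
        split_ifs <;> first | omega | norm_num
    · -- averaged block
      have hM : ((Rend Γ j - Lstart Γ j + 1 : ℕ) : ℝ) ≠ 0 := by positivity
      have hPa : Pent Γ j a = ((Rend Γ j - Lstart Γ j + 1 : ℕ) : ℝ)⁻¹ := by
        unfold Pent
        rw [if_pos ⟨hA, hRn⟩]
      have hAgen : ∀ t : ℕ, Rend Γ t = Rend Γ j →
          Aent Γ j t = (if j ≤ t then 1 else 0) -
            ((t - Lstart Γ j + 1 : ℕ) : ℝ) /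
              ((Rend Γ j - Lstart Γ j + 1 : ℕ) : ℝ) := by
        intro t ht
        unfold Aent
        rw [if_pos ht, if_pos hRn]
      rw [hPa]
      by_cases har' : a < Rend Γ j
      · have haG : inG Γ a := hiff1.2 har'
        rw [if_pos haG, hAgen a hA]
        by_cases hla' : Lstart Γ j < a
        · rw [if_pos (hiff2.2 hla'), hAgen (a - 1) (hra1 hla')]
          rw [show a - Lstart Γ j + 1 = (a - 1 - Lstart Γ j + 1) + 1 from by omega]
          push_cast
          split_ifs <;> first | omega | (field_simp; try ring)
        · rw [if_neg (fun hc => hla' (hiff2.1 hc))]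
          rw [show a - Lstart Γ j + 1 = 1 from by omega]
          push_cast
          split_ifs <;> first | omega | (field_simp; try ring)
      · -- a = Rend Γ j
        have hra : a = Rend Γ j := by omega
        have hnG : ¬ inG Γ a := fun hc => by have := hiff1.1 hc; omega
        rw [if_neg hnG]
        by_cases hla' : Lstart Γ j < a
        · rw [if_pos (hiff2.2 hla'), hAgen (a - 1) (hra1 hla')]
          rw [show Rend Γ j - Lstart Γ j + 1 = (a - 1 - Lstart Γ j + 1) + 1 from by omega]
          have hX : (0:ℝ) ≤ ((a - 1 - Lstart Γ j + 1 : ℕ) : ℝ) := Nat.cast_nonneg _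
          have hX1 : ((a - 1 - Lstart Γ j + 1 : ℕ) : ℝ) + 1 ≠ 0 := by positivity
          push_cast
          split_ifs <;> first | omega | (field_simp; try ring)
        · -- block of size one, a = j
          have hja : a = j := by omega
          rw [if_neg (fun hc => hla' (hiff2.1 hc)),
            show Rend Γ j - Lstart Γ j + 1 = 1 from by omega, if_pos hja]
          norm_num
  · -- a not in the block of j
    have hAa : Aent Γ j a = 0 := by unfold Aent; rw [if_neg hA]
    have hPa : Pent Γ j a = 0 := by
      unfold Pent; rw [if_neg (fun hc => hA hc.1)]
    have haj : a ≠ j := fun hc => hA (by rw [hc])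
    rw [hPa, hAa, if_neg haj]
    by_cases h2 : 0 < a ∧ inG Γ (a - 1)
    · rw [if_pos h2]
      have hre : Rend Γ (a - 1) = Rend Γ a := by
        have h3 := Rend_succ Γ h2.2
        rw [show a - 1 + 1 = a by omega] at h3
        exact h3.symm
      have : Aent Γ j (a - 1) = 0 := by
        unfold Aent; rw [if_neg (fun hc => hA (hre ▸ hc))]
      rw [this]
      split_ifs <;> norm_num
    · rw [if_neg h2]
      split_ifs <;> norm_num

/-- decomposition of a sum against a row of `B`. -/
lemma sum_row (i : Fin n) (f : ℕ → ℝ) :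
    ∑ a : Fin n, Bmat n i a * f a =
      f i - (if (i : ℕ) + 1 < n then f ((i : ℕ) + 1) else 0) := by
  have hsplit : ∀ a : Fin n, Bmat n i a * f a =
      (if a = i then f a else 0) - (if (a : ℕ) = (i : ℕ) + 1 then f a else 0) := by
    intro a
    unfold Bmat
    simp only [Matrix.of_apply]
    split_ifs with h1 h2 h3
    · exfalso; rw [h1] at h2; omega
    · ring
    · ring
    · ring
  rw [Finset.sum_congr rfl (fun a _ => hsplit a), Finset.sum_sub_distrib]
  congr 1
  · rw [Finset.sum_ite_eq' Finset.univ i (fun a : Fin n => f a)]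
    simp
  · by_cases h : (i : ℕ) + 1 < n
    · rw [if_pos h]
      have hcond : ∀ a : Fin n, ((a : ℕ) = (i : ℕ) + 1) ↔ (a = ⟨(i : ℕ) + 1, h⟩) := by
        intro a
        rw [Fin.ext_iff]
      rw [Finset.sum_congr rfl (fun a _ => if_congr (hcond a) rfl rfl),
        Finset.sum_ite_eq' Finset.univ (⟨(i : ℕ) + 1, h⟩ : Fin n) (fun a : Fin n => f a)]
      simp
    · rw [if_neg h]
      apply Finset.sum_eq_zero
      intro a _
      rw [if_neg]
      have := a.isLt
      omega

/-- decomposition of a sum against a column of `B_Γ`. -/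
lemma sum_col (a : Fin n) (g : ℕ → ℝ) :
    ∑ i : {i // i ∈ Γ}, Bmat n i.1 a * g i.1 =
      (if inG Γ a then g a else 0) -
        (if 0 < (a : ℕ) ∧ inG Γ ((a : ℕ) - 1) then g ((a : ℕ) - 1) else 0) := by
  have hsplit : ∀ i : Fin n, Bmat n i a * g i =
      (if a = i then g i else 0) - (if (a : ℕ) = (i : ℕ) + 1 then g i else 0) := by
    intro i
    unfold Bmat
    simp only [Matrix.of_apply]
    split_ifs with h1 h2 h3
    · exfalso; rw [h1] at h2; omega
    · ring
    · ring
    · ring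
  calc ∑ i : {i // i ∈ Γ}, Bmat n i.1 a * g i.1
      = ∑ i ∈ Γ, Bmat n i a * g i := Finset.sum_coe_sort Γ (fun i => Bmat n i a * g i)
    _ = ∑ i ∈ Γ, ((if a = i then g i else 0) - (if (a : ℕ) = (i : ℕ) + 1 then g i else 0)) :=
        Finset.sum_congr rfl (fun i _ => hsplit i)
    _ = _ := by
        rw [Finset.sum_sub_distrib]
        congr 1
        · rw [Finset.sum_ite_eq Γ a (fun i : Fin n => g i)]
          by_cases hin : a ∈ Γ
          · rw [if_pos hin, if_pos ((inG_coe Γ a).2 hin)]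
          · rw [if_neg hin, if_neg (fun hc => hin ((inG_coe Γ a).1 hc))]
        · by_cases h0 : 0 < (a : ℕ)
          · have hlt : (a : ℕ) - 1 < n := by have := a.isLt; omega
            have hcond : ∀ i : Fin n, ((a : ℕ) = (i : ℕ) + 1) ↔
                ((⟨(a : ℕ) - 1, hlt⟩ : Fin n) = i) := by
              intro i
              rw [Fin.ext_iff]
              simp only []
              omega
            rw [Finset.sum_congr rfl (fun i _ => if_congr (hcond i) rfl rfl),
              Finset.sum_ite_eq Γ (⟨(a : ℕ) - 1, hlt⟩ : Fin n) (fun i : Fin n => g i)]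
            by_cases hin : (⟨(a : ℕ) - 1, hlt⟩ : Fin n) ∈ Γ
            · rw [if_pos hin, if_pos ⟨h0, (inG_coe Γ _).2 hin⟩]
            · rw [if_neg hin, if_neg]
              rintro ⟨-, hc⟩
              exact hin ((inG_coe Γ _).1 hc)
          · rw [if_neg (fun hc => h0 hc.1)]
            apply Finset.sum_eq_zero
            intro i _
            rw [if_neg]
            omega

lemma key1 : subRows Γ * Pmat Γ = 0 := by
  ext i j
  rw [Matrix.mul_apply]
  have : ∀ a : Fin n, subRows Γ i a * Pmat Γ a j = Bmat n i.1 a * Pent Γ (j : ℕ) (a : ℕ) :=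
    fun a => rfl
  rw [Finset.sum_congr rfl (fun a _ => this a), sum_row i.1 (Pent Γ (j : ℕ))]
  rw [core1 Γ ((inG_coe Γ i.1).2 i.2)]
  simp

lemma key2 : (subRows Γ)ᵀ * Amat Γ = 1 - Pmat Γ := by
  ext a j
  rw [Matrix.mul_apply]
  have : ∀ i : {i // i ∈ Γ}, (subRows Γ)ᵀ a i * Amat Γ i j
      = Bmat n i.1 a * Aent Γ (j : ℕ) (i.1 : ℕ) := fun i => rfl
  rw [Finset.sum_congr rfl (fun i _ => this i), sum_col Γ a (Aent Γ (j : ℕ)),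
    core2 Γ a.isLt j.isLt]
  rw [Matrix.sub_apply, Matrix.one_apply]
  congr 1
  exact if_congr (by rw [Fin.ext_iff]) rfl rfl

lemma det_ne : (subRows Γ * (subRows Γ)ᵀ).det ≠ 0 := by
  intro hdet
  obtain ⟨v, hv0, hv⟩ := (Matrix.exists_mulVec_eq_zero_iff).2 hdet
  set w : Fin n → ℝ := (subRows Γ)ᵀ *ᵥ v with hwdef
  have hw : w ⬝ᵥ w = 0 := by
    have h1 : v ⬝ᵥ ((subRows Γ * (subRows Γ)ᵀ) *ᵥ v) = 0 := by
      rw [hv, dotProduct_zero]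
    calc w ⬝ᵥ w = (v ᵥ* subRows Γ) ⬝ᵥ w := by rw [← Matrix.mulVec_transpose]
      _ = v ⬝ᵥ (subRows Γ *ᵥ w) := (Matrix.dotProduct_mulVec v (subRows Γ) w).symm
      _ = v ⬝ᵥ ((subRows Γ * (subRows Γ)ᵀ) *ᵥ v) := by rw [hwdef, Matrix.mulVec_mulVec]
      _ = 0 := h1
  have hw0 : w = 0 := dotProduct_self_eq_zero.mp hw
  set y : ℕ → ℝ := fun t =>
    if h : inG Γ t then v ⟨⟨t, inG_lt Γ h⟩, h.choose_spec⟩ else 0 with hydef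
  have hgy : ∀ i : {i // i ∈ Γ}, y (i.1 : ℕ) = v i := by
    intro i
    have hin : inG Γ (i.1 : ℕ) := (inG_coe Γ i.1).2 i.2
    rw [hydef]
    simp only [dif_pos hin]
  have hwa : ∀ a : Fin n,
      y a - (if 0 < (a : ℕ) ∧ inG Γ ((a : ℕ) - 1) then y ((a : ℕ) - 1) else 0) = 0 := by
    intro a
    have h1 : w a = 0 := by rw [hw0]; rfl
    have h2 : w a = ∑ i : {i // i ∈ Γ}, Bmat n i.1 a * y i.1 := by
      rw [hwdef]
      simp only [Matrix.mulVec, dotProduct, Matrix.transpose_apply]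
      exact Finset.sum_congr rfl (fun i _ => by rw [hgy i]; rfl)
    rw [h2, sum_col Γ a y] at h1
    have h3 : (if inG Γ (a : ℕ) then y a else 0) = y a := by
      by_cases h : inG Γ (a : ℕ)
      · rw [if_pos h]
      · rw [if_neg h, hydef]; simp [h]
    rw [h3] at h1
    exact h1
  have hyz : ∀ t : ℕ, y t = 0 := by
    intro t
    induction t using Nat.strong_induction_on with
    | _ t ih =>
      by_cases h : t < n
      · have := hwa ⟨t, h⟩
        simp only [] at this
        by_cases hc : 0 < t ∧ inG Γ (t - 1)
        · rw [if_pos hc, ih (t - 1) (by omega)] at this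
          linarith
        · rw [if_neg hc] at this
          linarith
      · rw [hydef]
        have : ¬ inG Γ t := fun hc => h (inG_lt Γ hc)
        simp [this]
  apply hv0
  funext i
  rw [← hgy i, hyz]
  rfl

lemma isUnit_det : IsUnit (subRows Γ * (subRows Γ)ᵀ).det :=
  isUnit_iff_ne_zero.2 (det_ne Γ)

lemma Hmat_eq : Hmat Γ = Pmat Γ := by
  have hdet := isUnit_det Γ
  have h1 := key1 Γ
  have h2 := key2 Γ
  have hGA : (subRows Γ * (subRows Γ)ᵀ) * Amat Γ = subRows Γ := by
    rw [Matrix.mul_assoc, h2, Matrix.mul_sub, Matrix.mul_one, h1, sub_zero]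
  have hA : Amat Γ = (subRows Γ * (subRows Γ)ᵀ)⁻¹ * subRows Γ := by
    calc Amat Γ = 1 * Amat Γ := (Matrix.one_mul _).symm
      _ = ((subRows Γ * (subRows Γ)ᵀ)⁻¹ * (subRows Γ * (subRows Γ)ᵀ)) * Amat Γ := by
          rw [Matrix.nonsing_inv_mul _ hdet]
      _ = (subRows Γ * (subRows Γ)ᵀ)⁻¹ * (subRows Γ * (subRows Γ)ᵀ * Amat Γ) := by
          rw [Matrix.mul_assoc]
      _ = (subRows Γ * (subRows Γ)ᵀ)⁻¹ * subRows Γ := by rw [hGA]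
  unfold Hmat
  rw [Matrix.mul_assoc, ← hA, h2, sub_sub_cancel]

end Stmt11Aux

/-- for every index set `Γ ⊆ {1,…,n}`, the orthogonal projection matrix
`H = I_n − B_Γᵀ(B_Γ B_Γᵀ)⁻¹ B_Γ` onto the null space of `B_Γ` has all entries
nonnegative. -/
theorem stmt11 {n : ℕ} (Γ : Finset (Fin n)) :
    ∀ i j : Fin n, 0 ≤ Hmat Γ i j := by
  intro i j
  rw [Stmt11Aux.Hmat_eq Γ]
  exact Stmt11Aux.Pent_nonneg Γ (j : ℕ) (i : ℕ)
end
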